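/- arXiv:0904.4364 — 4 statements merged into one kernel-verified Lean document; each statement's English description precedes it below -/
import Mathlib

section
/- An event E ⊆ DS is time-superinvariant if and only if it is time-invariant. -/
/-! If `ω ∘ f` is nowhere constant and divergent, the time change `f` can have no flat stretch
and must be unbounded, so it is an order automorphism of `[0,∞)`. Its inverse is again an
unbounded strictly increasing time change, and `ω = (ω ∘ f) ∘ f⁻¹` turns each of the two
closure properties into the other. -/

open MeasureTheory Filter Set
open scoped ENNReal NNReal

noncomputable section

/-- The sample space: continuous functions `[0,∞) → ℝ`. -/
def Omega : Type := {f : ℝ≥0 → ℝ // Continuous f}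

instance : CoeFun Omega fun _ => ℝ≥0 → ℝ := ⟨Subtype.val⟩

/-- The filtration `F t`: the smallest σ-algebra making `ω ↦ ω s` measurable for `s ≤ t`. -/
def F (t : ℝ≥0∞) : MeasurableSpace Omega :=
  ⨆ (s : ℝ≥0) (_ : (s : ℝ≥0∞) ≤ t),
    MeasurableSpace.comap (fun ω : Omega => ω s) inferInstance

lemma F_mono : Monotone F := by
  intro s t hst
  refine iSup_mono fun u => ?_
  exact iSup_le fun hu => le_iSup_of_le (hu.trans hst) le_rfl

instance instMSOmega : MeasurableSpace Omega := F ⊤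

/-- The filtration as a Mathlib `Filtration`. -/
def FF : Filtration ℝ≥0∞ instMSOmega where
  seq := F
  mono' := F_mono
  le' := fun t => F_mono le_top

/-- Evaluation of a path at an extended time (times `≥ ∞` are sent to `0`). -/
def evalE (ω : Omega) (t : ℝ≥0∞) : ℝ := ω t.toNNReal

/-- A simple trading strategy. -/
structure SimpleStrategy where
  τ : ℕ → Omega → ℝ≥0∞
  bet : ℕ → Omega → ℝ
  isStopping : ∀ n, IsStoppingTime FF (fun ω => ((τ n ω : ℝ≥0∞) : WithTop ℝ≥0∞))
  mono : ∀ n ω, τ n ω ≤ τ (n + 1) ω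
  tendsto_top : ∀ ω, Tendsto (fun n => τ n ω) atTop (nhds ⊤)
  bet_measurable : ∀ n, Measurable[(isStopping n).measurableSpace] (bet n)
  bet_bounded : ∀ n, ∃ C : ℝ, ∀ ω, |bet n ω| ≤ C

/-- The simple capital process of a simple trading strategy with initial capital `c`. -/
def simpleCapital (G : SimpleStrategy) (c : ℝ) (t : ℝ≥0) (ω : Omega) : ℝ :=
  c + ∑' n : ℕ, G.bet n ω *
    (evalE ω (G.τ (n + 1) ω ⊓ (t : ℝ≥0∞)) - evalE ω (G.τ n ω ⊓ (t : ℝ≥0∞)))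

/-- A positive capital process: a countable sum of nonnegative simple capital processes. -/
structure PositiveCapital where
  G : ℕ → SimpleStrategy
  c : ℕ → ℝ
  c_nonneg : ∀ n, 0 ≤ c n
  c_summable : Summable c
  nonneg : ∀ n (t : ℝ≥0) ω, 0 ≤ simpleCapital (G n) (c n) t ω

/-- Value of a positive capital process at time `t` on path `ω`. -/
def PositiveCapital.val (S : PositiveCapital) (t : ℝ≥0) (ω : Omega) : ℝ≥0∞ :=
  ∑' n : ℕ, ENNReal.ofReal (simpleCapital (S.G n) (S.c n) t ω)

/-- Initial value of a positive capital process. -/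
def PositiveCapital.init (S : PositiveCapital) : ℝ≥0∞ :=
  ∑' n : ℕ, ENNReal.ofReal (S.c n)

/-- Outer content of a set of paths. -/
def outerContent (E : Set Omega) : ℝ≥0∞ :=
  ⨅ (S : PositiveCapital)
    (_ : ∀ ω ∈ E, 1 ≤ liminf (fun t : ℝ≥0 => S.val t ω) atTop), S.init

/-- Restricted outer content. -/
def outerContentOn (E B : Set Omega) : ℝ≥0∞ := outerContent (E ∩ B)

/-- Restricted inner content. -/
def innerContentOn (E B : Set Omega) : ℝ≥0∞ := 1 - outerContentOn Eᶜ B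

/-- A time change: continuous, increasing, starting at `0`. -/
structure TimeChange where
  f : ℝ≥0 → ℝ≥0
  continuous : Continuous f
  monotone : Monotone f
  map_zero : f 0 = 0

/-- Action of a time change on a path. -/
def TimeChange.act (g : TimeChange) (ω : Omega) : Omega :=
  ⟨fun t => ω (g.f t), ω.2.comp g.continuous⟩

/-- A set of paths is time-superinvariant if `ω∘f ∈ E` implies `ω ∈ E` for all time changes. -/
def TimeSuperinvariant (E : Set Omega) : Prop :=
  ∀ (ω : Omega) (g : TimeChange), g.act ω ∈ E → ω ∈ E

/-- `P` is the Wiener measure started at `c`. -/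
def IsWiener (c : ℝ) (P : Measure Omega) : Prop :=
  IsProbabilityMeasure P ∧
  P {ω : Omega | ω 0 = c} = 1 ∧
  ∀ s t : ℝ≥0, s < t →
    ProbabilityTheory.Indep (F s)
      (MeasurableSpace.comap (fun ω : Omega => ω t - ω s) inferInstance) P ∧
    P.map (fun ω : Omega => ω t - ω s) = ProbabilityTheory.gaussianReal 0 (t - s)


def NowhereConstant (ω : Omega) : Prop :=
  ∀ t₁ t₂ : ℝ≥0, t₁ < t₂ → ∃ s₁ ∈ Set.Ioo t₁ t₂, ∃ s₂ ∈ Set.Ioo t₁ t₂, ω s₁ ≠ ω s₂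

/-- `ω` is divergent: it has no finite limit at infinity. -/
def Divergent (ω : Omega) : Prop :=
  ¬ ∃ c : ℝ, Tendsto (fun t => ω t) atTop (nhds c)

/-- The divergent and nowhere constant paths. -/
def DS : Set Omega := {ω | Divergent ω ∧ NowhereConstant ω}

/-- `ω` is constant on `[u,v]`. -/
def ConstOn (ω : Omega) (u v : ℝ≥0) : Prop := ∀ s ∈ Set.Icc u v, ω s = ω u

/-- `t` is a point of increase of `ω`. -/
def PointOfIncrease (ω : Omega) (t : ℝ≥0) : Prop :=
  ∃ δ : ℝ≥0, 0 < δ ∧ ∀ t₁ t₂ : ℝ≥0, t - δ < t₁ → t₁ < t → t < t₂ → t₂ < t + δ →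
    ω t₁ ≤ ω t ∧ ω t ≤ ω t₂

/-- `t` is a point of decrease of `ω`. -/
def PointOfDecrease (ω : Omega) (t : ℝ≥0) : Prop :=
  ∃ δ : ℝ≥0, 0 < δ ∧ ∀ t₁ t₂ : ℝ≥0, t - δ < t₁ → t₁ < t → t < t₂ → t₂ < t + δ →
    ω t₁ ≥ ω t ∧ ω t ≥ ω t₂

/-- `ω` is locally constant to the right of `t`. -/
def LocallyConstantRight (ω : Omega) (t : ℝ≥0) : Prop :=
  ∃ δ : ℝ≥0, 0 < δ ∧ ∀ s ∈ Set.Icc t (t + δ), ω s = ω t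

/-- The `p`-variation of `ω` over `[u,v]`. -/
def pVar (ω : Omega) (u v : ℝ≥0) (p : ℝ) : ℝ≥0∞ :=
  ⨆ (n : ℕ) (t : ℕ → ℝ≥0) (_ : Monotone t) (_ : t 0 = u) (_ : t n = v),
    ∑ i ∈ Finset.range n, ENNReal.ofReal (|ω (t (i + 1)) - ω (t i)| ^ p)

/-- `ln* u = max(1, |ln u|)`. -/
def lnStar (u : ℝ) : ℝ := max 1 |Real.log u|

/-- Taylor's function `ψ(u) = u²/(2 ln* ln* u)`, with `ψ(0)=0`. -/
def taylorPsi (u : ℝ) : ℝ := if u = 0 then 0 else u ^ 2 / (2 * lnStar (lnStar u))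

/-- The `φ`-variation of `ω` over `[0,T]`. -/
def phiVar (φ : ℝ → ℝ) (T : ℝ≥0) (ω : Omega) : ℝ≥0∞ :=
  ⨆ (n : ℕ) (t : ℕ → ℝ≥0) (_ : Monotone t) (_ : t 0 = 0) (_ : t n = T),
    ∑ i ∈ Finset.range n, ENNReal.ofReal (φ |ω (t (i + 1)) - ω (t i)|)

/-- Taylor's quadratic variation `qvar_T(ω)`. -/
def qvar (T : ℝ≥0) (ω : Omega) : ℝ≥0∞ :=
  ⨅ (δ : ℝ) (_ : 0 < δ),
    ⨆ (n : ℕ) (t : ℕ → ℝ≥0) (_ : Monotone t) (_ : t 0 = 0) (_ : t n = T)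
      (_ : ∀ i < n, (t (i + 1) : ℝ) - t i < δ),
      ∑ i ∈ Finset.range n, ENNReal.ofReal (taylorPsi |ω (t (i + 1)) - ω (t i)|)


/-- The dyadic grid `D_n`. -/
def grid (n : ℕ) : Set ℝ := {x | ∃ k : ℤ, x = k * (2 : ℝ) ^ (-(n : ℤ))}

/-- Hitting times of the grid `D_n`: `hitT n k` is `T^n_{k-1}` of the paper (so `hitT n 0 = 0`). -/
def hitT (n : ℕ) : ℕ → Omega → ℝ≥0∞
  | 0, _ => 0
  | 1, ω => ⨅ (t : ℝ≥0) (_ : ω t ∈ grid n), (t : ℝ≥0∞)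
  | (k + 2), ω =>
      ⨅ (t : ℝ≥0) (_ : hitT n (k + 1) ω ≤ (t : ℝ≥0∞) ∧ ω t ∈ grid n ∧
          ω t ≠ evalE ω (hitT n (k + 1) ω)), (t : ℝ≥0∞)

/-- The approximating quadratic variation process `A^n_t`. -/
def Aproc (n : ℕ) (t : ℝ≥0) (ω : Omega) : ℝ≥0∞ :=
  ∑' k : ℕ, ENNReal.ofReal
    ((evalE ω (hitT n (k + 1) ω ⊓ (t : ℝ≥0∞)) - evalE ω (hitT n k ω ⊓ (t : ℝ≥0∞))) ^ 2)

/-- `Ā_t`. -/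
def upA (t : ℝ≥0) (ω : Omega) : ℝ≥0∞ := limsup (fun n => Aproc n t ω) atTop

/-- `A̲_t`. -/
def lowA (t : ℝ≥0) (ω : Omega) : ℝ≥0∞ := liminf (fun n => Aproc n t ω) atTop

/-- The stopping times `τ_s` used for the normalizing time change. -/
def tauQ (s : ℝ≥0) (ω : Omega) : ℝ≥0∞ :=
  ⨅ (t : ℝ≥0) (_ : (∀ u : ℝ≥0, u < t → upA u ω = lowA u ω ∧ upA u ω ≠ ⊤) ∧
      ContinuousOn (fun u : ℝ≥0 => (upA u ω).toReal) (Set.Iio t) ∧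
      (⨆ u ∈ Set.Iio t, upA u ω) = (⨆ u ∈ Set.Iio t, lowA u ω) ∧
      (s : ℝ≥0∞) ≤ ⨆ u ∈ Set.Iio t, upA u ω),
    (t : ℝ≥0∞)

/-- The normalizing time change applied to `ω` (with `ω(∞) := 0`). -/
def ntMap (ω : Omega) : ℝ≥0 → ℝ :=
  fun s => if tauQ s ω = ⊤ then 0 else ω (tauQ s ω).toNNReal

/-- Preimage of a set of paths under the normalizing time change. -/
def ntPre (E : Set Omega) : Set Omega :=
  {ω | ∃ hc : Continuous (ntMap ω), (⟨ntMap ω, hc⟩ : Omega) ∈ E}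

/-- The event `A_∞ = ∞`. -/
def AInfty : Set Omega :=
  {ω | (∀ t : ℝ≥0, upA t ω = lowA t ω) ∧ Tendsto (fun t : ℝ≥0 => upA t ω) atTop (nhds ⊤)}



/-- A set of paths is time-invariant if it is closed under the action of all unbounded strictly
increasing time changes. -/
def TimeInvariant (E : Set Omega) : Prop :=
  ∀ ω ∈ E, ∀ g : TimeChange, StrictMono g.f → Tendsto g.f atTop atTop → g.act ω ∈ E

namespace TimeChange

def ofOrderIso (e : ℝ≥0 ≃o ℝ≥0) : TimeChange where
  f := e
  continuous := e.continuous
  monotone := e.monotone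
  map_zero := e.map_bot

lemma surjective_of_tendsto_atTop (g : TimeChange) (ht : Tendsto g.f atTop atTop) :
    Function.Surjective g.f := by
  refine g.continuous.surjective ht ?_
  simpa only [OrderBot.atBot_eq, bot_eq_zero', g.map_zero] using tendsto_pure_pure g.f 0

lemma act_act_of_rightInverse (g h : TimeChange) (hgh : Function.RightInverse h.f g.f)
    (ω : Omega) : h.act (g.act ω) = ω :=
  Subtype.ext <| funext fun t => congrArg ω (hgh t)

lemma exists_act_inverse (g : TimeChange) (hs : StrictMono g.f)
    (ht : Tendsto g.f atTop atTop) :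
    ∃ h : TimeChange, StrictMono h.f ∧ Tendsto h.f atTop atTop ∧ ∀ ω, h.act (g.act ω) = ω := by
  let e := hs.orderIsoOfSurjective g.f (g.surjective_of_tendsto_atTop ht)
  refine ⟨ofOrderIso e.symm, e.symm.strictMono, e.symm.tendsto_atTop,
    act_act_of_rightInverse g _ fun t => ?_⟩
  exact hs.orderIsoOfSurjective_self_symm_apply g.f _ t

lemma strictMono_of_nowhereConstant_act (g : TimeChange) {ω : Omega}
    (hω : NowhereConstant (g.act ω)) : StrictMono g.f := by
  intro a b hlt
  refine lt_of_le_of_ne (g.monotone hlt.le) fun hab => ?_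
  obtain ⟨s₁, hs₁, s₂, hs₂, hne⟩ := hω a b hlt
  have hconst : ∀ s ∈ Ioo a b, g.f s = g.f a := fun s hs =>
    le_antisymm (hab ▸ g.monotone hs.2.le) (g.monotone hs.1.le)
  exact hne (congrArg ω ((hconst s₁ hs₁).trans (hconst s₂ hs₂).symm))

lemma tendsto_atTop_of_divergent_act (g : TimeChange) {ω : Omega}
    (hω : Divergent (g.act ω)) : Tendsto g.f atTop atTop := by
  refine tendsto_atTop_atTop_of_monotone' g.monotone fun hbdd => ?_
  exact hω ⟨ω (⨆ t, g.f t), (ω.2.tendsto _).comp (tendsto_atTop_ciSup g.monotone hbdd)⟩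

end TimeChange

/-- An event `E ⊆ DS` is time-superinvariant iff it is time-invariant. -/
theorem timeSuperinvariant_iff_timeInvariant (E : Set Omega) (hE : E ⊆ DS) :
    TimeSuperinvariant E ↔ TimeInvariant E := by
  constructor
  · intro hSup ω hω g hgs hgt
    obtain ⟨h, -, -, hinv⟩ := g.exists_act_inverse hgs hgt
    exact hSup (g.act ω) h (by rwa [hinv])
  · intro hInv ω g hgω
    obtain ⟨hdiv, hnc⟩ := hE hgω
    obtain ⟨h, hhs, hht, hinv⟩ :=
      g.exists_act_inverse (g.strictMono_of_nowhereConstant_act hnc)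
        (g.tendsto_atTop_of_divergent_act hdiv)
    simpa only [hinv] using hInv (g.act ω) hgω h hhs hht

end
end

section
/- Let T ∈ [0,∞), ω ∈ Ω, and let f be a time change. Then qvar_T(ω∘f) = qvar_{f(T)}(ω). -/
open MeasureTheory Filter Set
open scoped ENNReal NNReal

noncomputable section

/-!
A partition of `[0, T]` is carried by `f` to a partition of `[0, f T]` with the same increments
of the path, and by uniform continuity of `f` fine partitions go to fine ones; this gives
`qvar_T(ω ∘ f) ≤ qvar_{f T}(ω)`. Conversely, a fine partition of `[0, f T]` lifts along a left
inverse of `f` to a partition of `[0, T]` with the same increments, whose steps may however be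
long where `f` is nearly flat. At most `T / δ` steps have length `≥ δ`; replacing each of them by
a fine partition loses at most its own term `ψ(|Δω|)`, which is small by uniform continuity of `ω`.
-/

open Finset Topology

def variationSum (φ : ℝ → ℝ) (W : ℝ≥0 → ℝ) (t : ℕ → ℝ≥0) (n : ℕ) : ℝ≥0∞ :=
  ∑ i ∈ range n, ENNReal.ofReal (φ |W (t (i + 1)) - W (t i)|)

structure FinePartition (a b : ℝ≥0) (δ : ℝ) where
  n : ℕ
  t : ℕ → ℝ≥0
  mono : Monotone t
  t_zero : t 0 = a
  t_n : t n = b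
  mesh_lt : ∀ i < n, (t (i + 1) : ℝ) - t i < δ

/-- The supremum in `qvar` before the limit `δ → 0`, for partitions of `[a, b]`. -/
def fineVar (φ : ℝ → ℝ) (W : ℝ≥0 → ℝ) (a b : ℝ≥0) (δ : ℝ) : ℝ≥0∞ :=
  ⨆ p : FinePartition a b δ, variationSum φ W p.t p.n

lemma qvar_eq_iInf_fineVar (T : ℝ≥0) (ω : Omega) :
    qvar T ω = ⨅ (δ : ℝ) (_ : 0 < δ), fineVar taylorPsi ω 0 T δ := by
  refine iInf_congr fun δ => iInf_congr fun _ => le_antisymm ?_ ?_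
  · exact iSup_le fun n => iSup_le fun t => iSup_le fun h₁ => iSup_le fun h₂ =>
      iSup_le fun h₃ => iSup_le fun h₄ => le_iSup_of_le ⟨n, t, h₁, h₂, h₃, h₄⟩ le_rfl
  · exact iSup_le fun p => le_iSup_of_le p.n <| le_iSup_of_le p.t <| le_iSup_of_le p.mono <|
      le_iSup_of_le p.t_zero <| le_iSup_of_le p.t_n <| le_iSup_of_le p.mesh_lt le_rfl

def seqAppend {α : Type*} (s : ℕ → α) (n : ℕ) (s' : ℕ → α) (i : ℕ) : α :=
  if i ≤ n then s i else s' (i - n)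

lemma seqAppend_of_le {α : Type*} (s : ℕ → α) (n : ℕ) (s' : ℕ → α) {i : ℕ} (hi : i ≤ n) :
    seqAppend s n s' i = s i :=
  if_pos hi

lemma seqAppend_add {α : Type*} {s : ℕ → α} {n : ℕ} {s' : ℕ → α} (h : s n = s' 0) (j : ℕ) :
    seqAppend s n s' (n + j) = s' j := by
  rcases j with _ | j
  · exact (seqAppend_of_le s n s' le_rfl).trans h
  · exact (if_neg (by omega)).trans (by rw [Nat.add_sub_cancel_left])

namespace FinePartition

variable {a b c : ℝ≥0} {δ : ℝ}

lemma t_le (p : FinePartition a b δ) {i : ℕ} (hi : i ≤ p.n) : p.t i ≤ b :=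
  (p.mono hi).trans_eq p.t_n

lemma le_fineVar (φ : ℝ → ℝ) (W : ℝ≥0 → ℝ) (p : FinePartition a b δ) :
    variationSum φ W p.t p.n ≤ fineVar φ W a b δ :=
  le_iSup (fun p : FinePartition a b δ => variationSum φ W p.t p.n) p

def single (hab : a ≤ b) (h : (b : ℝ) - a < δ) : FinePartition a b δ where
  n := 1
  t i := if i = 0 then a else b
  mono i j hij := by
    dsimp only
    split_ifs <;> first | exact le_rfl | exact hab | omega
  t_zero := rfl
  t_n := rfl
  mesh_lt i hi := by
    obtain rfl : i = 0 := by omega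
    simpa using h

def uniform (hab : a ≤ b) (hδ : 0 < δ) : FinePartition a b δ :=
  let N := ⌊((b - a : ℝ≥0) : ℝ) / δ⌋₊ + 1
  { n := N
    t := fun i => a + i * ((b - a) / N)
    mono := fun i j hij => by dsimp only; gcongr
    t_zero := by simp
    t_n := by
      rw [mul_div_cancel₀ _ (by positivity), add_tsub_cancel_of_le hab]
    mesh_lt := fun i _ => by
      have hN : ((b - a : ℝ≥0) : ℝ) / δ < N := by
        simpa [N] using Nat.lt_floor_add_one (((b - a : ℝ≥0) : ℝ) / δ)
      rw [div_lt_iff₀ hδ] at hN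
      push_cast
      rw [add_sub_add_left_eq_sub, ← sub_mul, add_sub_cancel_left, one_mul,
        div_lt_iff₀ (by positivity)]
      linarith }

def append (p : FinePartition a b δ) (q : FinePartition b c δ) : FinePartition a c δ where
  n := p.n + q.n
  t := seqAppend p.t p.n q.t
  mono := by
    refine monotone_nat_of_le_succ fun i => ?_
    rcases lt_or_ge i p.n with hi | hi
    · rw [seqAppend_of_le _ _ _ hi.le, seqAppend_of_le _ _ _ hi]
      exact p.mono i.le_succ
    · obtain ⟨j, rfl⟩ := Nat.exists_eq_add_of_le hi
      rw [seqAppend_add (p.t_n.trans q.t_zero.symm), add_assoc,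
        seqAppend_add (p.t_n.trans q.t_zero.symm)]
      exact q.mono j.le_succ
  t_zero := by rw [seqAppend_of_le _ _ _ (Nat.zero_le _), p.t_zero]
  t_n := by rw [seqAppend_add (p.t_n.trans q.t_zero.symm), q.t_n]
  mesh_lt i hi := by
    rcases lt_or_ge i p.n with hi' | hi'
    · rw [seqAppend_of_le _ _ _ hi'.le, seqAppend_of_le _ _ _ hi']
      exact p.mesh_lt i hi'
    · obtain ⟨j, rfl⟩ := Nat.exists_eq_add_of_le hi'
      rw [seqAppend_add (p.t_n.trans q.t_zero.symm), add_assoc,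
        seqAppend_add (p.t_n.trans q.t_zero.symm)]
      exact q.mesh_lt j (by omega)

end FinePartition

section fineVar

variable {φ : ℝ → ℝ} {W : ℝ≥0 → ℝ} {a b c : ℝ≥0} {δ : ℝ}

lemma variationSum_append (p : FinePartition a b δ) (q : FinePartition b c δ) :
    variationSum φ W (p.append q).t (p.append q).n =
      variationSum φ W p.t p.n + variationSum φ W q.t q.n := by
  have hpq : p.t p.n = q.t 0 := p.t_n.trans q.t_zero.symm
  refine (sum_range_add _ _ _).trans (congrArg₂ (· + ·) ?_ ?_) <;>
    refine sum_congr rfl fun i hi => ?_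
  · simp only [FinePartition.append, seqAppend_of_le _ _ _ (mem_range.1 hi).le,
      seqAppend_of_le _ _ _ (mem_range.1 hi)]
  · simp only [FinePartition.append, add_assoc, seqAppend_add hpq]

lemma fineVar_add_le (hab : a ≤ b) (hbc : b ≤ c) (hδ : 0 < δ) :
    fineVar φ W a b δ + fineVar φ W b c δ ≤ fineVar φ W a c δ := by
  have : Nonempty (FinePartition a b δ) := ⟨.uniform hab hδ⟩
  have : Nonempty (FinePartition b c δ) := ⟨.uniform hbc hδ⟩
  exact ENNReal.iSup_add_iSup_le fun p q =>
    (variationSum_append p q).symm.trans_le ((p.append q).le_fineVar φ W)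

lemma fineVar_mono_right (hab : a ≤ b) (hbc : b ≤ c) (hδ : 0 < δ) :
    fineVar φ W a b δ ≤ fineVar φ W a c δ :=
  le_self_add.trans (fineVar_add_le hab hbc hδ)

lemma ofReal_le_fineVar (hab : a ≤ b) (h : (b : ℝ) - a < δ) :
    ENNReal.ofReal (φ |W b - W a|) ≤ fineVar φ W a b δ := by
  simpa [variationSum, FinePartition.single] using (FinePartition.single hab h).le_fineVar φ W

end fineVar

def longSteps (t : ℕ → ℝ≥0) (n : ℕ) (δ : ℝ) : Finset ℕ :=
  {i ∈ range n | δ ≤ (t (i + 1) : ℝ) - t i}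

lemma card_longSteps_mul_le {t : ℕ → ℝ≥0} (ht : Monotone t) (n : ℕ) (δ : ℝ) :
    (#(longSteps t n δ) : ℝ) * δ ≤ t n - t 0 := by
  calc (#(longSteps t n δ) : ℝ) * δ = ∑ _i ∈ longSteps t n δ, δ := by
        rw [sum_const, nsmul_eq_mul]
    _ ≤ ∑ i ∈ longSteps t n δ, ((t (i + 1) : ℝ) - t i) :=
        sum_le_sum fun i hi => (mem_filter.1 hi).2
    _ ≤ ∑ i ∈ range n, ((t (i + 1) : ℝ) - t i) :=
        sum_le_sum_of_subset_of_nonneg (filter_subset _ _) fun i _ _ =>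
          sub_nonneg.2 (NNReal.coe_le_coe.2 (ht i.le_succ))
    _ = t n - t 0 := sum_range_sub (fun i => (t i : ℝ)) n

lemma card_longSteps_succ (t : ℕ → ℝ≥0) (n : ℕ) (δ : ℝ) :
    #(longSteps t (n + 1) δ) =
      #(longSteps t n δ) + if δ ≤ (t (n + 1) : ℝ) - t n then 1 else 0 := by
  simp only [longSteps, card_filter, sum_range_succ]

lemma variationSum_le_fineVar_add {φ : ℝ → ℝ} {W : ℝ≥0 → ℝ} {L : ℕ → ℝ≥0} (hL : Monotone L)
    {δ : ℝ} (hδ : 0 < δ) {C : ℝ≥0∞} {n : ℕ}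
    (hC : ∀ i < n, ENNReal.ofReal (φ |W (L (i + 1)) - W (L i)|) ≤ C) :
    variationSum φ W L n ≤ fineVar φ W (L 0) (L n) δ + #(longSteps L n δ) * C := by
  induction n with
  | zero => simp [variationSum]
  | succ n ih =>
    -- a short step is a fine partition by itself; a long one is paid for by `C`
    have ih := ih fun i hi => hC i (by omega)
    have h0n : L 0 ≤ L n := hL (Nat.zero_le n)
    have hstep : L n ≤ L (n + 1) := hL n.le_succ
    rw [variationSum, sum_range_succ, ← variationSum, card_longSteps_succ]
    split_ifs with hlong
    · calc _ ≤ fineVar φ W (L 0) (L n) δ + #(longSteps L n δ) * C + C :=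
            add_le_add ih (hC n n.lt_succ_self)
        _ ≤ fineVar φ W (L 0) (L (n + 1)) δ + #(longSteps L n δ) * C + C := by
            gcongr
            exact fineVar_mono_right h0n hstep hδ
        _ = _ := by push_cast; ring
    · calc _ ≤ fineVar φ W (L 0) (L n) δ + #(longSteps L n δ) * C +
              fineVar φ W (L n) (L (n + 1)) δ :=
            add_le_add ih (ofReal_le_fineVar hstep (not_le.1 hlong))
        _ ≤ fineVar φ W (L 0) (L (n + 1)) δ + #(longSteps L n δ) * C := by
            rw [add_right_comm]
            gcongr
            exact fineVar_add_le h0n hstep hδ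
        _ = _ := by simp

lemma Continuous.exists_pos_dist_lt {α : Type*} [PseudoMetricSpace α] {h : ℝ≥0 → α}
    (hh : Continuous h) (b : ℝ≥0) {ε : ℝ} (hε : 0 < ε) :
    ∃ δ > 0, ∀ x y, x ≤ y → y ≤ b → (y : ℝ) - x < δ → dist (h x) (h y) < ε := by
  obtain ⟨δ, hδ, H⟩ := Metric.uniformContinuousOn_iff.1
    (isCompact_Icc.uniformContinuousOn_of_continuous hh.continuousOn :
      UniformContinuousOn h (Icc 0 b)) ε hε
  refine ⟨δ, hδ, fun x y hxy hy hlt => H x ⟨zero_le, hxy.trans hy⟩ y ⟨zero_le, hy⟩ ?_⟩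
  rwa [NNReal.dist_eq, abs_sub_comm, abs_of_nonneg (sub_nonneg.2 (NNReal.coe_le_coe.2 hxy))]

lemma fineVar_comp_le {φ : ℝ → ℝ} {W : ℝ≥0 → ℝ} {f : ℝ≥0 → ℝ≥0} (hf : Monotone f)
    {a b : ℝ≥0} {δ δ' : ℝ}
    (hδ : ∀ x y, x ≤ y → y ≤ b → (y : ℝ) - x < δ → (f y : ℝ) - f x < δ') :
    fineVar φ (W ∘ f) a b δ ≤ fineVar φ W (f a) (f b) δ' :=
  iSup_le fun p => FinePartition.le_fineVar φ W
    { n := p.n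
      t := f ∘ p.t
      mono := hf.comp p.mono
      t_zero := congrArg f p.t_zero
      t_n := congrArg f p.t_n
      mesh_lt := fun i hi => hδ _ _ (p.mono i.le_succ) (p.t_le hi) (p.mesh_lt i hi) }

namespace TimeChange

variable (g : TimeChange) {s s' T : ℝ≥0}

def lowerInv (s : ℝ≥0) : ℝ≥0 := sInf {t | s ≤ g.f t}

lemma lowerInv_zero : g.lowerInv 0 = 0 :=
  nonpos_iff_eq_zero.1 (csInf_le (OrderBot.bddBelow _) (zero_le : 0 ≤ g.f 0))

lemma lowerInv_le (hs : s ≤ g.f T) : g.lowerInv s ≤ T :=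
  csInf_le (OrderBot.bddBelow _) hs

lemma lowerInv_mono (hss' : s ≤ s') (hs' : s' ≤ g.f T) : g.lowerInv s ≤ g.lowerInv s' :=
  csInf_le_csInf (OrderBot.bddBelow _) ⟨T, hs'⟩ fun _ ht => hss'.trans ht

lemma f_lowerInv (hs : s ≤ g.f T) : g.f (g.lowerInv s) = s := by
  refine le_antisymm ?_ ((isClosed_le continuous_const g.continuous).csInf_mem ⟨T, hs⟩
    (OrderBot.bddBelow _))
  obtain ⟨c, -, hc⟩ := intermediate_value_Icc zero_le g.continuous.continuousOn
    ⟨g.map_zero.trans_le zero_le, hs⟩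
  exact (g.monotone (csInf_le (OrderBot.bddBelow _) hc.ge)).trans hc.le

end TimeChange

lemma fineVar_le_fineVar_comp_add {φ : ℝ → ℝ} {W : ℝ≥0 → ℝ} (g : TimeChange) {T : ℝ≥0}
    {δ δ' : ℝ} (hδ : 0 < δ) {N : ℕ} (hN : (T : ℝ) < N * δ) {C : ℝ≥0∞}
    (hC : ∀ x y, x ≤ y → y ≤ g.f T → (y : ℝ) - x < δ' →
      ENNReal.ofReal (φ |W y - W x|) ≤ C) :
    fineVar φ W 0 (g.f T) δ' ≤ fineVar φ (W ∘ g.f) 0 T δ + N * C := by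
  refine iSup_le fun s => ?_
  -- `lowerInv` is monotone only below `g.f T`, hence the clamping
  set L : ℕ → ℝ≥0 := fun i => g.lowerInv (min (s.t i) (g.f T))
  have hL : Monotone L := fun i j hij =>
    g.lowerInv_mono (min_le_min_right _ (s.mono hij)) (min_le_right _ _)
  have hfL : ∀ i ≤ s.n, g.f (L i) = s.t i := fun i hi => by
    simp only [L, min_eq_left (s.t_le hi)]
    exact g.f_lowerInv (s.t_le hi)
  have hL0 : L 0 = 0 := by simp only [L, s.t_zero, zero_min, g.lowerInv_zero]
  have hLn : L s.n ≤ T := g.lowerInv_le (min_le_right _ _)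
  have hcard : #(longSteps L s.n δ) ≤ N := by
    have := card_longSteps_mul_le hL s.n δ
    rw [hL0, NNReal.coe_zero, sub_zero] at this
    exact_mod_cast (lt_of_mul_lt_mul_right (this.trans_lt
      ((NNReal.coe_le_coe.2 hLn).trans_lt hN)) hδ.le).le
  calc variationSum φ W s.t s.n = variationSum φ (W ∘ g.f) L s.n :=
        sum_congr rfl fun i hi => by
          simp only [Function.comp_apply, hfL i (mem_range.1 hi).le, hfL (i + 1) (mem_range.1 hi)]
    _ ≤ fineVar φ (W ∘ g.f) (L 0) (L s.n) δ + #(longSteps L s.n δ) * C :=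
        variationSum_le_fineVar_add hL hδ fun i hi => by
          simp only [Function.comp_apply, hfL i hi.le, hfL (i + 1) hi]
          exact hC _ _ (s.mono i.le_succ) (s.t_le hi) (s.mesh_lt i hi)
    _ ≤ fineVar φ (W ∘ g.f) 0 T δ + N * C := by
        rw [hL0]
        gcongr
        exact fineVar_mono_right zero_le hLn hδ

lemma iInf_fineVar_comp_le (g : TimeChange) (φ : ℝ → ℝ) (W : ℝ≥0 → ℝ) (T : ℝ≥0) :
    ⨅ (δ : ℝ) (_ : 0 < δ), fineVar φ (W ∘ g.f) 0 T δ ≤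
      ⨅ (δ : ℝ) (_ : 0 < δ), fineVar φ W 0 (g.f T) δ := by
  refine le_iInf₂ fun δ' hδ' => ?_
  obtain ⟨δ, hδ, H⟩ := g.continuous.exists_pos_dist_lt T hδ'
  refine iInf₂_le_of_le δ hδ ((fineVar_comp_le g.monotone fun x y hxy hy hlt => ?_).trans_eq
    (by rw [g.map_zero]))
  have := H x y hxy hy hlt
  rw [NNReal.dist_eq, abs_sub_comm] at this
  exact (le_abs_self _).trans_lt this

lemma le_iInf_fineVar_comp (g : TimeChange) {φ : ℝ → ℝ} (hφ : Tendsto φ (𝓝[≥] 0) (𝓝 0))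
    {W : ℝ≥0 → ℝ} (hW : Continuous W) (T : ℝ≥0) :
    ⨅ (δ : ℝ) (_ : 0 < δ), fineVar φ W 0 (g.f T) δ ≤
      ⨅ (δ : ℝ) (_ : 0 < δ), fineVar φ (W ∘ g.f) 0 T δ := by
  refine le_iInf₂ fun δ hδ => ENNReal.le_of_forall_pos_le_add fun ε hε _ => ?_
  obtain ⟨N, hN⟩ := exists_nat_gt ((T : ℝ) / δ)
  have hN0 : 0 < N := by exact_mod_cast (div_nonneg T.2 hδ.le).trans_lt hN
  obtain ⟨η, hη, hφη⟩ := Metric.tendsto_nhdsWithin_nhds.1 hφ (ε / N : ℝ≥0)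
    (NNReal.coe_pos.2 (div_pos hε (Nat.cast_pos.2 hN0)))
  obtain ⟨δ', hδ', hWδ'⟩ := hW.exists_pos_dist_lt (g.f T) hη
  refine iInf₂_le_of_le δ' hδ' ((fineVar_le_fineVar_comp_add g hδ ((div_lt_iff₀ hδ).1 hN)
    (C := (ε / N : ℝ≥0)) fun x y hxy hy hlt => ?_).trans_eq ?_)
  · have := hφη (abs_nonneg (W y - W x)) (by
      rw [Real.dist_eq, sub_zero, abs_abs, ← Real.dist_eq, dist_comm]
      exact hWδ' x y hxy hy hlt)
    rw [Real.dist_eq, sub_zero] at this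
    exact ENNReal.ofReal_le_of_le_toReal ((le_abs_self _).trans this.le)
  · rw [← ENNReal.coe_natCast, ← ENNReal.coe_mul, mul_div_cancel₀ _ (by positivity)]

lemma taylorPsi_nonneg (u : ℝ) : 0 ≤ taylorPsi u := by
  have : 0 < lnStar (lnStar u) := zero_lt_one.trans_le (le_max_left _ _)
  unfold taylorPsi
  split_ifs <;> positivity

lemma taylorPsi_le_sq_div_two (u : ℝ) : taylorPsi u ≤ u ^ 2 / 2 := by
  unfold taylorPsi
  split_ifs
  · positivity
  · have : (1 : ℝ) ≤ lnStar (lnStar u) := le_max_left _ _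
    gcongr
    linarith

lemma tendsto_taylorPsi : Tendsto taylorPsi (𝓝 0) (𝓝 0) := by
  have : Tendsto (fun u : ℝ => u ^ 2 / 2) (𝓝 0) (𝓝 0) := by
    simpa using ((continuous_pow 2).div_const (2 : ℝ)).tendsto 0
  exact tendsto_of_tendsto_of_tendsto_of_le_of_le tendsto_const_nhds this taylorPsi_nonneg
    taylorPsi_le_sq_div_two

/-- `qvar_T(ω∘f) = qvar_{f(T)}(ω)` for every time change `f`. -/
theorem qvar_timeChange (T : ℝ≥0) (ω : Omega) (g : TimeChange) :
    qvar T (g.act ω) = qvar (g.f T) ω := by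
  rw [qvar_eq_iInf_fineVar, qvar_eq_iInf_fineVar]
  exact le_antisymm (iInf_fineVar_comp_le g taylorPsi ω T)
    (le_iInf_fineVar_comp g (tendsto_taylorPsi.mono_left nhdsWithin_le_nhds) ω.2 T)
end
end

section
/- Let P be a probability measure on (Ω, F) such that the coordinate process X_t(ω) := ω(t) is a martingale with respect to P and the filtration (F_t). Then P(E) ≤ P̄(E) for every event E ∈ F. -/
open MeasureTheory Filter Set
open scoped ENNReal NNReal

noncomputable section

/-- The filtration `(F_t)_{t ∈ [0,∞)}`. -/
def FFfin : Filtration ℝ≥0 instMSOmega where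
  seq := fun t => F t
  mono' := fun _ _ hst => F_mono (ENNReal.coe_le_coe.mpr hst)
  le' := fun _ => F_mono le_top

/-!
A simple capital process is a martingale transform `c + ∑ hₙ (X_{τₙ₊₁ ∧ t} - X_{τₙ ∧ t})` of the
coordinate process `X`, and each increment has mean zero by optional sampling. For a continuous
martingale this follows from the discrete case: round the stopping times up to the dyadic grid
of mesh `2⁻ᵏ`; the rounded values are conditional expectations of `X_{T+1}`, hence uniformly
integrable, and converge pointwise by continuity, hence in `L¹`. The partial sums of the
transform are the capital at the stopping times `τ_N ∧ t`, hence nonnegative, so Fatou's lemma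
gives `E[K_t] ≤ c`, and summing over the components `E[S_t] ≤ S_0`. If `liminf S_t ≥ 1` on `E`,
Markov's inequality and Fatou's lemma along integer times give `P(E) ≤ S_0`.
-/

open scoped Topology

namespace NNReal

def dyadicCeil (k : ℕ) (x : ℝ≥0) : ℝ≥0 := ⌈x * 2 ^ k⌉₊ / 2 ^ k

variable (k : ℕ)

lemma le_dyadicCeil (x : ℝ≥0) : x ≤ dyadicCeil k x := by
  rw [dyadicCeil, le_div_iff₀ (by positivity)]
  exact Nat.le_ceil _

lemma dyadicCeil_le_add (x : ℝ≥0) : dyadicCeil k x ≤ x + (2 ^ k)⁻¹ := by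
  rw [dyadicCeil, div_le_iff₀ (by positivity), add_mul, inv_mul_cancel₀ (by positivity)]
  exact (Nat.ceil_lt_add_one zero_le).le

lemma dyadicCeil_le_add_one {x T : ℝ≥0} (hx : x ≤ T) : dyadicCeil k x ≤ T + 1 :=
  (dyadicCeil_le_add k x).trans (add_le_add hx (inv_le_one_of_one_le₀ (one_le_pow₀ one_le_two)))

lemma dyadicCeil_mono : Monotone (dyadicCeil k) := fun x y h => by
  unfold dyadicCeil
  gcongr

lemma dyadicCeil_le_iff (x s : ℝ≥0) : dyadicCeil k x ≤ s ↔ x ≤ ⌊s * 2 ^ k⌋₊ / 2 ^ k := by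
  rw [dyadicCeil, div_le_iff₀ (by positivity), le_div_iff₀ (by positivity),
    ← Nat.le_floor_iff (zero_le : 0 ≤ s * 2 ^ k), Nat.ceil_le]

lemma floor_mul_div_le (s : ℝ≥0) : (⌊s * 2 ^ k⌋₊ : ℝ≥0) / 2 ^ k ≤ s := by
  rw [div_le_iff₀ (by positivity)]
  exact Nat.floor_le zero_le

lemma tendsto_dyadicCeil (x : ℝ≥0) : Tendsto (fun k => dyadicCeil k x) atTop (𝓝 x) := by
  have h : Tendsto (fun k : ℕ => x + (2 ^ k)⁻¹) atTop (𝓝 (x + 0)) := by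
    refine tendsto_const_nhds.add ?_
    simp_rw [← inv_pow]
    exact tendsto_pow_atTop_nhds_zero_of_lt_one (inv_lt_one_of_one_lt₀ one_lt_two)
  rw [add_zero] at h
  exact tendsto_of_tendsto_of_tendsto_of_le_of_le tendsto_const_nhds h
    (le_dyadicCeil · x) (dyadicCeil_le_add · x)

lemma range_dyadicCeil_subset : range (dyadicCeil k) ⊆ range fun j : ℕ => (j : ℝ≥0) / 2 ^ k := by
  rintro _ ⟨x, rfl⟩
  exact ⟨_, rfl⟩

end NNReal

open NNReal

namespace MeasureTheory

variable {Ω : Type*} {m : MeasurableSpace Ω} {μ : Measure Ω} {ℱ : Filtration ℝ≥0 m}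
  {X : ℝ≥0 → Ω → ℝ} {σ σ' : Ω → ℝ≥0} {T : ℝ≥0}

lemma IsStoppingTime.dyadicCeil (hσ : IsStoppingTime ℱ fun ω => (σ ω : WithTop ℝ≥0)) (k : ℕ) :
    IsStoppingTime ℱ fun ω => (dyadicCeil k (σ ω) : WithTop ℝ≥0) := by
  intro s
  have h := ℱ.mono (floor_mul_div_le k s) _ (hσ ((⌊s * 2 ^ k⌋₊ : ℝ≥0) / 2 ^ k))
  simpa only [WithTop.coe_le_coe, dyadicCeil_le_iff] using h

lemma countable_range_dyadicCeil (σ : Ω → ℝ≥0) (k : ℕ) :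
    (range fun ω => (dyadicCeil k (σ ω) : WithTop ℝ≥0)).Countable := by
  refine ((countable_range fun j : ℕ => (j : ℝ≥0) / 2 ^ k).image ((↑) : ℝ≥0 → WithTop ℝ≥0)).mono ?_
  rintro _ ⟨ω, rfl⟩
  exact mem_image_of_mem _ (range_dyadicCeil_subset k (mem_range_self _))

namespace Martingale

variable [IsFiniteMeasure μ]

lemma stoppedValue_dyadicCeil_ae_eq_condExp (hX : Martingale X ℱ μ)
    (hσ : IsStoppingTime ℱ fun ω => (σ ω : WithTop ℝ≥0)) (hσT : ∀ ω, σ ω ≤ T) (k : ℕ) :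
    stoppedValue X (fun ω => (dyadicCeil k (σ ω) : WithTop ℝ≥0)) =ᵐ[μ]
      μ[X (T + 1) | (hσ.dyadicCeil k).measurableSpace] :=
  hX.stoppedValue_ae_eq_condExp_of_le_const_of_countable_range (hσ.dyadicCeil k)
    (fun ω => WithTop.coe_le_coe.2 (dyadicCeil_le_add_one k (hσT ω)))
    (countable_range_dyadicCeil σ k)

lemma uniformIntegrable_stoppedValue_dyadicCeil (hX : Martingale X ℱ μ)
    (hσ : IsStoppingTime ℱ fun ω => (σ ω : WithTop ℝ≥0)) (hσT : ∀ ω, σ ω ≤ T) :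
    UniformIntegrable
      (fun k => stoppedValue X fun ω => (dyadicCeil k (σ ω) : WithTop ℝ≥0)) 1 μ :=
  ((hX.integrable (T + 1)).uniformIntegrable_condExp fun k =>
      (hσ.dyadicCeil k).measurableSpace_le).ae_eq
    fun k => (hX.stoppedValue_dyadicCeil_ae_eq_condExp hσ hσT k).symm

lemma tendsto_stoppedValue_dyadicCeil (hcont : ∀ ω, Continuous fun t => X t ω) (ω : Ω) :
    Tendsto (fun k => stoppedValue X (fun ω => (dyadicCeil k (σ ω) : WithTop ℝ≥0)) ω) atTop
      (𝓝 (stoppedValue X (fun ω => (σ ω : WithTop ℝ≥0)) ω)) :=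
  ((hcont ω).tendsto _).comp (tendsto_dyadicCeil _)

lemma integrable_stoppedValue_of_continuous (hX : Martingale X ℱ μ)
    (hcont : ∀ ω, Continuous fun t => X t ω)
    (hσ : IsStoppingTime ℱ fun ω => (σ ω : WithTop ℝ≥0)) (hσT : ∀ ω, σ ω ≤ T) :
    Integrable (stoppedValue X fun ω => (σ ω : WithTop ℝ≥0)) μ :=
  (hX.uniformIntegrable_stoppedValue_dyadicCeil hσ hσT).integrable_of_ae_tendsto
    (ae_of_all _ (tendsto_stoppedValue_dyadicCeil hcont))

lemma tendsto_eLpNorm_stoppedValue_dyadicCeil (hX : Martingale X ℱ μ)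
    (hcont : ∀ ω, Continuous fun t => X t ω)
    (hσ : IsStoppingTime ℱ fun ω => (σ ω : WithTop ℝ≥0)) (hσT : ∀ ω, σ ω ≤ T) :
    Tendsto (fun k => eLpNorm ((stoppedValue X fun ω => (dyadicCeil k (σ ω) : WithTop ℝ≥0)) -
      stoppedValue X fun ω => (σ ω : WithTop ℝ≥0)) 1 μ) atTop (𝓝 0) :=
  have hUI := hX.uniformIntegrable_stoppedValue_dyadicCeil hσ hσT
  tendsto_Lp_finite_of_tendsto_ae le_rfl ENNReal.one_ne_top hUI.1
    (memLp_one_iff_integrable.2 (hX.integrable_stoppedValue_of_continuous hcont hσ hσT)) hUI.2.1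
    (ae_of_all _ (tendsto_stoppedValue_dyadicCeil hcont))

lemma tendsto_setIntegral_stoppedValue_dyadicCeil (hX : Martingale X ℱ μ)
    (hcont : ∀ ω, Continuous fun t => X t ω)
    (hσ : IsStoppingTime ℱ fun ω => (σ ω : WithTop ℝ≥0)) (hσT : ∀ ω, σ ω ≤ T) (A : Set Ω) :
    Tendsto (fun k => ∫ ω in A, stoppedValue X (fun ω => (dyadicCeil k (σ ω) : WithTop ℝ≥0)) ω ∂μ)
      atTop (𝓝 (∫ ω in A, stoppedValue X (fun ω => (σ ω : WithTop ℝ≥0)) ω ∂μ)) :=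
  tendsto_setIntegral_of_L1' _ (hX.integrable_stoppedValue_of_continuous hcont hσ hσT).1
    (Eventually.of_forall fun k =>
      memLp_one_iff_integrable.1 ((hX.uniformIntegrable_stoppedValue_dyadicCeil hσ hσT).memLp k))
    (hX.tendsto_eLpNorm_stoppedValue_dyadicCeil hcont hσ hσT) A

lemma setIntegral_stoppedValue_eq_of_le (hX : Martingale X ℱ μ)
    (hcont : ∀ ω, Continuous fun t => X t ω)
    (hσ : IsStoppingTime ℱ fun ω => (σ ω : WithTop ℝ≥0))
    (hσ' : IsStoppingTime ℱ fun ω => (σ' ω : WithTop ℝ≥0)) (hle : σ ≤ σ') (hσ'T : ∀ ω, σ' ω ≤ T)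
    {A : Set Ω} (hA : MeasurableSet[hσ.measurableSpace] A) :
    ∫ ω in A, stoppedValue X (fun ω => (σ ω : WithTop ℝ≥0)) ω ∂μ =
      ∫ ω in A, stoppedValue X (fun ω => (σ' ω : WithTop ℝ≥0)) ω ∂μ := by
  have hσT ω : σ ω ≤ T := (hle ω).trans (hσ'T ω)
  have h_dyadic k :
      ∫ ω in A, stoppedValue X (fun ω => (dyadicCeil k (σ' ω) : WithTop ℝ≥0)) ω ∂μ =
        ∫ ω in A, stoppedValue X (fun ω => (dyadicCeil k (σ ω) : WithTop ℝ≥0)) ω ∂μ := by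
    have hA_k : MeasurableSet[(hσ.dyadicCeil k).measurableSpace] A :=
      hσ.measurableSpace_mono (hσ.dyadicCeil k)
        (fun ω => WithTop.coe_le_coe.2 (le_dyadicCeil k (σ ω))) A hA
    have h_sampling := hX.stoppedValue_ae_eq_condExp_of_le_of_countable_range
      (hσ'.dyadicCeil k) (hσ.dyadicCeil k)
      (fun ω => WithTop.coe_le_coe.2 (dyadicCeil_mono k (hle ω)))
      (fun ω => WithTop.coe_le_coe.2 (dyadicCeil_le_add_one k (hσ'T ω)))
      (countable_range_dyadicCeil σ' k) (countable_range_dyadicCeil σ k)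
    rw [integral_congr_ae (ae_restrict_of_ae h_sampling),
      setIntegral_condExp (hσ.dyadicCeil k).measurableSpace_le _ hA_k]
    exact memLp_one_iff_integrable.1
      ((hX.uniformIntegrable_stoppedValue_dyadicCeil hσ' hσ'T).memLp k)
  exact tendsto_nhds_unique
    (hX.tendsto_setIntegral_stoppedValue_dyadicCeil hcont hσ hσT A)
    ((hX.tendsto_setIntegral_stoppedValue_dyadicCeil hcont hσ' hσ'T A).congr h_dyadic)

lemma stoppedValue_ae_eq_condExp_of_le_of_continuous (hX : Martingale X ℱ μ)
    (hcont : ∀ ω, Continuous fun t => X t ω)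
    (hσ : IsStoppingTime ℱ fun ω => (σ ω : WithTop ℝ≥0))
    (hσ' : IsStoppingTime ℱ fun ω => (σ' ω : WithTop ℝ≥0)) (hle : σ ≤ σ') (hσ'T : ∀ ω, σ' ω ≤ T) :
    stoppedValue X (fun ω => (σ ω : WithTop ℝ≥0)) =ᵐ[μ]
      μ[stoppedValue X (fun ω => (σ' ω : WithTop ℝ≥0)) | hσ.measurableSpace] :=
  ae_eq_condExp_of_forall_setIntegral_eq hσ.measurableSpace_le
    (hX.integrable_stoppedValue_of_continuous hcont hσ' hσ'T)
    (fun _ _ _ => (hX.integrable_stoppedValue_of_continuous hcont hσ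
      fun ω => (hle ω).trans (hσ'T ω)).integrableOn)
    (fun _ hA _ => hX.setIntegral_stoppedValue_eq_of_le hcont hσ hσ' hle hσ'T hA)
    (measurable_stoppedValue
      (hX.stronglyAdapted.isStronglyProgressive_of_continuous hcont) hσ).aestronglyMeasurable

lemma integral_mul_stoppedValue_sub_eq_zero (hX : Martingale X ℱ μ)
    (hcont : ∀ ω, Continuous fun t => X t ω)
    (hσ : IsStoppingTime ℱ fun ω => (σ ω : WithTop ℝ≥0))
    (hσ' : IsStoppingTime ℱ fun ω => (σ' ω : WithTop ℝ≥0)) (hle : σ ≤ σ') (hσ'T : ∀ ω, σ' ω ≤ T)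
    {h : Ω → ℝ} {C : ℝ} (hh : StronglyMeasurable[hσ.measurableSpace] h) (hC : ∀ ω, ‖h ω‖ ≤ C) :
    ∫ ω, h ω * (stoppedValue X (fun ω => (σ' ω : WithTop ℝ≥0)) ω -
      stoppedValue X (fun ω => (σ ω : WithTop ℝ≥0)) ω) ∂μ = 0 := by
  set Y := stoppedValue X fun ω => (σ' ω : WithTop ℝ≥0)
  set Z := stoppedValue X fun ω => (σ ω : WithTop ℝ≥0)
  have hY := hX.integrable_stoppedValue_of_continuous hcont hσ' hσ'T
  have hZ := hX.integrable_stoppedValue_of_continuous hcont hσ fun ω => (hle ω).trans (hσ'T ω)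
  have hh' : AEStronglyMeasurable h μ := (hh.mono hσ.measurableSpace_le).aestronglyMeasurable
  have hhY : Integrable (fun ω => h ω * Y ω) μ := hY.bdd_mul hh' (ae_of_all _ hC)
  have hhZ : Integrable (fun ω => h ω * Z ω) μ := hZ.bdd_mul hh' (ae_of_all _ hC)
  have h_pull : ∫ ω, h ω * Y ω ∂μ = ∫ ω, h ω * Z ω ∂μ := calc
    ∫ ω, h ω * Y ω ∂μ = ∫ ω, μ[h * Y | hσ.measurableSpace] ω ∂μ :=
      (integral_condExp hσ.measurableSpace_le).symm
    _ = ∫ ω, h ω * Z ω ∂μ := by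
      refine integral_congr_ae ((condExp_mul_of_stronglyMeasurable_left hh hhY hY).trans ?_)
      filter_upwards [hX.stoppedValue_ae_eq_condExp_of_le_of_continuous hcont hσ hσ' hle hσ'T]
        with ω hω
      rw [Pi.mul_apply, ← hω]
  simp_rw [mul_sub]
  rw [integral_sub hhY hhZ, h_pull, sub_self]

end Martingale
end MeasureTheory

namespace MeasureTheory.IsStoppingTime

variable {Ω ι β : Type*} {m : MeasurableSpace Ω} [LinearOrder ι] [TopologicalSpace ι]
  [SecondCountableTopology ι] [OrderTopology ι] {ℱ : Filtration ι m} {τ : Ω → WithTop ι}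
  [MeasurableSpace β] [Zero β]

lemma measurable_indicator_le_const (hτ : IsStoppingTime ℱ τ) {g : Ω → β}
    (hg : Measurable[hτ.measurableSpace] g) (i : ι) :
    Measurable[(hτ.min_const i).measurableSpace] ({ω | τ ω ≤ i}.indicator g) := by
  have h_avoid_zero {B : Set β} (hB : MeasurableSet B) (h0 : (0 : β) ∉ B) :
      MeasurableSet[(hτ.min_const i).measurableSpace] ({ω | τ ω ≤ i}.indicator g ⁻¹' B) := by
    rw [indicator_preimage_of_notMem _ _ h0]
    exact hτ.measurableSet_inter_le (isStoppingTime_const ℱ i) _ (hg hB)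
  intro B hB
  by_cases h0 : (0 : β) ∈ B
  · simpa only [preimage_compl, compl_compl] using
      (h_avoid_zero hB.compl (not_not_intro h0)).compl
  · exact h_avoid_zero hB h0

end MeasureTheory.IsStoppingTime

-- The strategies' stopping times are `FF`-stopping times with values in `ℝ≥0∞`, while the
-- martingale lives on `FFfin`; bounded ones can be moved from the first to the second.
lemma F_top_le_iSup_FFfin : F ⊤ ≤ ⨆ t, FFfin t :=
  iSup₂_le fun s _ => le_iSup_of_le s (le_iSup₂_of_le s le_rfl le_rfl)

section ReindexStoppingTime

variable {ρ : Omega → ℝ≥0} {τ : Omega → WithTop ℝ≥0∞}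

lemma MeasureTheory.IsStoppingTime.toFFfin (hτ : IsStoppingTime FF τ)
    (hρ : ∀ ω, τ ω = ((ρ ω : ℝ≥0∞) : WithTop ℝ≥0∞)) :
    IsStoppingTime FFfin fun ω => (ρ ω : WithTop ℝ≥0) := by
  intro s
  have h := hτ s
  simp only [hρ, WithTop.coe_le_coe, ENNReal.coe_le_coe] at h
  simp only [WithTop.coe_le_coe]
  exact h

lemma MeasureTheory.IsStoppingTime.measurableSpace_le_toFFfin (hτ : IsStoppingTime FF τ)
    (hρ : ∀ ω, τ ω = ((ρ ω : ℝ≥0∞) : WithTop ℝ≥0∞)) :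
    hτ.measurableSpace ≤ (hτ.toFFfin hρ).measurableSpace := fun A hA =>
  ⟨F_top_le_iSup_FFfin A (iSup_le FF.le A hA.1), fun s => by
    have h := hA.2 s
    simp only [hρ, WithTop.coe_le_coe] at h
    simp only [WithTop.coe_le_coe]
    exact_mod_cast h⟩

end ReindexStoppingTime

lemma isStronglyProgressive_coordinate :
    IsStronglyProgressive FFfin fun (t : ℝ≥0) (ω : Omega) => ω t :=
  StronglyAdapted.isStronglyProgressive_of_continuous (fun s =>
    have h : MeasurableSpace.comap (fun ω : Omega => ω s) inferInstance ≤ F s :=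
      le_iSup₂_of_le s le_rfl le_rfl
    (measurable_iff_comap_le.2 h).stronglyMeasurable) fun ω => ω.2

namespace SimpleStrategy

variable (G : SimpleStrategy) (t : ℝ≥0)

lemma monotone_τ (ω : Omega) : Monotone fun n => G.τ n ω :=
  monotone_nat_of_le_succ fun n => G.mono n ω

lemma measurable_bet (n : ℕ) : Measurable (G.bet n) :=
  (G.bet_measurable n).mono (G.isStopping n).measurableSpace_le le_rfl

def truncTime (n : ℕ) (ω : Omega) : ℝ≥0 := (G.τ n ω ⊓ t).toNNReal

lemma coe_truncTime (n : ℕ) (ω : Omega) : (G.truncTime t n ω : ℝ≥0∞) = G.τ n ω ⊓ t :=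
  ENNReal.coe_toNNReal (ne_top_of_le_ne_top ENNReal.coe_ne_top inf_le_right)

lemma truncTime_le (n : ℕ) (ω : Omega) : G.truncTime t n ω ≤ t := by
  rw [← ENNReal.coe_le_coe, coe_truncTime]
  exact inf_le_right

lemma truncTime_mono {n n' : ℕ} (h : n ≤ n') (ω : Omega) :
    G.truncTime t n ω ≤ G.truncTime t n' ω := by
  rw [← ENNReal.coe_le_coe, coe_truncTime, coe_truncTime]
  exact inf_le_inf_right _ (G.monotone_τ ω h)

lemma truncTime_of_le {n : ℕ} {ω : Omega} (h : (t : ℝ≥0∞) ≤ G.τ n ω) :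
    G.truncTime t n ω = t := by
  rw [← ENNReal.coe_inj, coe_truncTime, inf_eq_right.2 h]

lemma truncTime_truncTime {n N : ℕ} (h : n ≤ N) (ω : Omega) :
    G.truncTime (G.truncTime t N ω) n ω = G.truncTime t n ω := by
  rw [← ENNReal.coe_inj, coe_truncTime, coe_truncTime, coe_truncTime, ← inf_assoc,
    inf_eq_left.2 (G.monotone_τ ω h)]

lemma min_τ_eq_truncTime (n : ℕ) (ω : Omega) :
    min (G.τ n ω : WithTop ℝ≥0∞) ((t : ℝ≥0∞) : WithTop ℝ≥0∞) =
      ((G.truncTime t n ω : ℝ≥0∞) : WithTop ℝ≥0∞) := by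
  rw [coe_truncTime, WithTop.coe_min]

lemma isStoppingTime_truncTime (n : ℕ) :
    IsStoppingTime FFfin fun ω => (G.truncTime t n ω : WithTop ℝ≥0) :=
  ((G.isStopping n).min_const t).toFFfin (G.min_τ_eq_truncTime t n)

lemma measurable_eval_truncTime (n : ℕ) : Measurable fun ω : Omega => ω (G.truncTime t n ω) :=
  have h := measurable_stoppedValue isStronglyProgressive_coordinate
    (G.isStoppingTime_truncTime t n)
  h.mono (G.isStoppingTime_truncTime t n).measurableSpace_le le_rfl

-- `hₙ` need not be `𝓕_{τₙ ∧ t}`-measurable, but it is once switched off on `{τₙ > t}`, where the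
-- increment vanishes anyway (`increment_eq_indicator_mul`).
lemma measurable_indicator_bet (n : ℕ) :
    Measurable[(G.isStoppingTime_truncTime t n).measurableSpace]
      ({ω | G.τ n ω ≤ t}.indicator (G.bet n)) := by
  have h := (G.isStopping n).measurable_indicator_le_const (G.bet_measurable n) t
  simp only [WithTop.coe_le_coe] at h
  exact h.mono (((G.isStopping n).min_const t).measurableSpace_le_toFFfin
    (G.min_τ_eq_truncTime t n)) le_rfl

def increment (n : ℕ) (ω : Omega) : ℝ :=
  G.bet n ω * (ω (G.truncTime t (n + 1) ω) - ω (G.truncTime t n ω))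

lemma simpleCapital_eq_tsum (c : ℝ) (ω : Omega) :
    simpleCapital G c t ω = c + ∑' n, G.increment t n ω := rfl

lemma increment_eq_zero {n : ℕ} {ω : Omega} (h : (t : ℝ≥0∞) ≤ G.τ n ω) :
    G.increment t n ω = 0 := by
  rw [increment, G.truncTime_of_le t h, G.truncTime_of_le t (h.trans (G.mono n ω)), sub_self,
    mul_zero]

lemma increment_eq_indicator_mul (n : ℕ) (ω : Omega) :
    G.increment t n ω = {ω | G.τ n ω ≤ t}.indicator (G.bet n) ω *
      (ω (G.truncTime t (n + 1) ω) - ω (G.truncTime t n ω)) := by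
  by_cases h : G.τ n ω ≤ t
  · simp only [indicator_of_mem (show ω ∈ {ω | G.τ n ω ≤ t} from h), increment]
  · simp only [indicator_of_notMem (show ω ∉ {ω | G.τ n ω ≤ t} from h), zero_mul,
      G.increment_eq_zero t (not_le.1 h).le]

lemma eventually_increment_eq_zero (ω : Omega) :
    ∀ᶠ n in atTop, G.increment t n ω = 0 :=
  ((G.tendsto_top ω).eventually (eventually_ge_nhds ENNReal.coe_lt_top)).mono
    fun _ h => G.increment_eq_zero t h

lemma tendsto_add_sum_increment (c : ℝ) (ω : Omega) :
    Tendsto (fun N => c + ∑ n ∈ Finset.range N, G.increment t n ω) atTop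
      (𝓝 (simpleCapital G c t ω)) := by
  obtain ⟨M, hM⟩ := eventually_atTop.1 (G.eventually_increment_eq_zero t ω)
  have hsum : Summable (G.increment t · ω) := summable_of_ne_finset_zero (s := Finset.range M)
    fun n hn => hM n (not_lt.1 (Finset.mem_range.not.1 hn))
  exact hsum.hasSum.tendsto_sum_nat.const_add c

lemma add_sum_increment_eq_simpleCapital (c : ℝ) (N : ℕ) (ω : Omega) :
    c + ∑ n ∈ Finset.range N, G.increment t n ω =
      simpleCapital G c (G.truncTime t N ω) ω := by
  rw [simpleCapital_eq_tsum, tsum_eq_sum (s := Finset.range N)]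
  · refine congrArg (c + ·) (Finset.sum_congr rfl fun n hn => ?_)
    have hn := Finset.mem_range.1 hn
    rw [increment, increment, G.truncTime_truncTime t hn, G.truncTime_truncTime t hn.le]
  · intro n hn
    refine G.increment_eq_zero _ ?_
    rw [coe_truncTime]
    exact inf_le_left.trans (G.monotone_τ ω (not_lt.1 (Finset.mem_range.not.1 hn)))

lemma measurable_increment (n : ℕ) : Measurable (G.increment t n) :=
  (G.measurable_bet n).mul
    ((G.measurable_eval_truncTime t (n + 1)).sub (G.measurable_eval_truncTime t n))

lemma measurable_simpleCapital (c : ℝ) : Measurable (simpleCapital G c t) :=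
  measurable_of_tendsto_metrizable
    (fun _ => measurable_const.add (Finset.measurable_sum _ fun n _ => G.measurable_increment t n))
    (tendsto_pi_nhds.2 (G.tendsto_add_sum_increment t c))

variable {P : Measure Omega} [IsProbabilityMeasure P]
  (hmart : Martingale (fun (t : ℝ≥0) (ω : Omega) => ω t) FFfin P)
include hmart

lemma integrable_increment (n : ℕ) : Integrable (G.increment t n) P := by
  obtain ⟨C, hC⟩ := G.bet_bounded n
  exact ((hmart.integrable_stoppedValue_of_continuous (fun ω => ω.2)
    (G.isStoppingTime_truncTime t (n + 1)) (G.truncTime_le t (n + 1))).sub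
    (hmart.integrable_stoppedValue_of_continuous (fun ω => ω.2)
    (G.isStoppingTime_truncTime t n) (G.truncTime_le t n))).bdd_mul
    (G.measurable_bet n).aestronglyMeasurable (ae_of_all _ hC)

lemma integral_increment (n : ℕ) : ∫ ω, G.increment t n ω ∂P = 0 := by
  obtain ⟨C, hC⟩ := G.bet_bounded n
  have hC' ω : ‖{ω | G.τ n ω ≤ t}.indicator (G.bet n) ω‖ ≤ C :=
    (norm_indicator_le_norm_self _ _).trans (hC ω)
  simp_rw [G.increment_eq_indicator_mul t n]
  exact hmart.integral_mul_stoppedValue_sub_eq_zero (fun ω => ω.2)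
    (G.isStoppingTime_truncTime t n) (G.isStoppingTime_truncTime t (n + 1))
    (fun ω => G.truncTime_mono t n.le_succ ω) (G.truncTime_le t (n + 1))
    (G.measurable_indicator_bet t n).stronglyMeasurable hC'

lemma lintegral_ofReal_simpleCapital_le {c : ℝ} (hnonneg : ∀ s ω, 0 ≤ simpleCapital G c s ω) :
    ∫⁻ ω, ENNReal.ofReal (simpleCapital G c t ω) ∂P ≤ ENNReal.ofReal c := by
  set K : ℕ → Omega → ℝ := fun N ω => c + ∑ n ∈ Finset.range N, G.increment t n ω
  have hK_int N : Integrable (K N) P :=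
    (integrable_const c).add (integrable_finsetSum _ fun n _ => G.integrable_increment t hmart n)
  have hK_nonneg N ω : 0 ≤ K N ω := by
    simp only [K, G.add_sum_increment_eq_simpleCapital]
    exact hnonneg _ ω
  have hK_lintegral N : ∫⁻ ω, ENNReal.ofReal (K N ω) ∂P = ENNReal.ofReal c := by
    rw [← ofReal_integral_eq_lintegral_ofReal (hK_int N) (ae_of_all _ (hK_nonneg N)),
      integral_add (integrable_const c) (integrable_finsetSum _ fun n _ =>
        G.integrable_increment t hmart n),
      integral_finsetSum _ fun n _ => G.integrable_increment t hmart n]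
    simp [G.integral_increment t hmart]
  calc ∫⁻ ω, ENNReal.ofReal (simpleCapital G c t ω) ∂P
      = ∫⁻ ω, liminf (fun N => ENNReal.ofReal (K N ω)) atTop ∂P := lintegral_congr fun ω =>
        ((ENNReal.continuous_ofReal.tendsto _).comp
          (G.tendsto_add_sum_increment t c ω)).liminf_eq.symm
    _ ≤ liminf (fun N => ∫⁻ ω, ENNReal.ofReal (K N ω) ∂P) atTop :=
        lintegral_liminf_le' fun N => (hK_int N).aemeasurable.ennreal_ofReal
    _ = ENNReal.ofReal c := by simp only [hK_lintegral, liminf_const]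

end SimpleStrategy

namespace PositiveCapital

variable (S : PositiveCapital) (t : ℝ≥0)

lemma measurable_val : Measurable (S.val t) :=
  Measurable.tsum fun n => ((S.G n).measurable_simpleCapital t (S.c n)).ennreal_ofReal

lemma lintegral_val_le_init {P : Measure Omega} [IsProbabilityMeasure P]
    (hmart : Martingale (fun (t : ℝ≥0) (ω : Omega) => ω t) FFfin P) :
    ∫⁻ ω, S.val t ω ∂P ≤ S.init := by
  unfold val
  rw [lintegral_tsum fun n =>
    ((S.G n).measurable_simpleCapital t (S.c n)).ennreal_ofReal.aemeasurable]
  exact ENNReal.tsum_le_tsum fun n =>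
    (S.G n).lintegral_ofReal_simpleCapital_le t hmart (S.nonneg n)

end PositiveCapital

lemma MeasureTheory.measure_le_of_one_le_liminf {Ω : Type*} {m : MeasurableSpace Ω}
    {μ : Measure Ω} {f : ℕ → Ω → ℝ≥0∞} (hf : ∀ k, Measurable (f k)) {c : ℝ≥0∞}
    (hc : ∀ k, ∫⁻ ω, f k ω ∂μ ≤ c) {E : Set Ω} (hE : ∀ ω ∈ E, 1 ≤ liminf (f · ω) atTop) :
    μ E ≤ c := calc
  μ E ≤ μ {ω | 1 ≤ liminf (f · ω) atTop} := measure_mono hE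
  _ ≤ ∫⁻ ω, liminf (f · ω) atTop ∂μ := by
    simpa only [one_mul] using mul_meas_ge_le_lintegral₀ (Measurable.liminf hf).aemeasurable 1
  _ ≤ liminf (fun k => ∫⁻ ω, f k ω ∂μ) atTop := lintegral_liminf_le hf
  _ ≤ c := liminf_le_of_frequently_le' (Frequently.of_forall hc)

theorem measure_le_outerContent_general (P : Measure Omega) (hprob : IsProbabilityMeasure P)
    (hmart : Martingale (fun (t : ℝ≥0) (ω : Omega) => ω t) FFfin P)
    (E : Set Omega) :
    P E ≤ outerContent E := by
  refine le_iInf₂ fun S hS => measure_le_of_one_le_liminf (fun k => S.measurable_val k)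
    (fun k => S.lintegral_val_le_init k hmart) fun ω hω => ?_
  exact (hS ω hω).trans tendsto_natCast_atTop_atTop.liminf_le_liminf_comp

/-- if the coordinate process is a martingale under `P`, then `P(E) ≤ P̄(E)`
for every event `E`. -/
theorem measure_le_outerContent (P : Measure Omega) (hprob : IsProbabilityMeasure P)
    (hmart : Martingale (fun (t : ℝ≥0) (ω : Omega) => ω t) FFfin P)
    (E : Set Omega) (hE : MeasurableSet E) :
    P E ≤ outerContent E :=
  measure_le_outerContent_general P hprob hmart E
end
end

section
/- Fix h ∈ ℝ. For all reals a < μ < b there exists M ∈ ℝ such that for every x ∈ [a,b]: exp(h(x − μ) − (h²/8)(b − a)²) − 1 ≤ M·(x − μ); one may take M = ((e^{h(b−μ)} − e^{h(a−μ)})/(b − a))·exp(−(h²/8)(b − a)²). Consequently, in the game of forecasting bounded variables, for each N the product Π_{n=1}^N exp(h(x_n − μ_n) − (h²/8)(b_n − a_n)²) is a supercapital process starting from 1: there exist bets M_n, each a function of (a_1,b_1,μ_1,x_1,…,a_{n−1},b_{n−1},μ_{n−1},x_{n−1},a_n,b_n,μ_n), such that whenever a_n < μ_n < b_n and x_n ∈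 [a_n,b_n] for all n, Π_{k=1}^n exp(h(x_k − μ_k) − (h²/8)(b_k − a_k)²) ≤ Π_{k=1}^{n−1} exp(h(x_k − μ_k) − (h²/8)(b_k − a_k)²) + M_n·(x_n − μ_n) for every n. -/
/-!
Since `y ↦ exp(h(y - μ))` is convex, on `[a, b]` it lies below its chord. The value of the chord
at `μ` is `𝔼 exp(h(X - μ))` for the two-point law on `{a, b}` with mean `μ`, which Hoeffding's lemma
bounds by `exp(h²(b - a)²/8)`. Dividing by this constant gives
`exp(h(x - μ) - h²(b - a)²/8) ≤ 1 + M(x - μ)` with `M` the rescaled slope of the chord. Hence the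
product of these factors is a supercapital process: on round `n` Sceptic bets the current capital
times that round's slope.
-/

open MeasureTheory ProbabilityTheory Real

lemma hoeffding_lemma_two_point {a b : ℝ} (ha : a ≤ 0) (hb : 0 ≤ b) (hab : a < b) (t : ℝ) :
    (b * exp (t * a) - a * exp (t * b)) / (b - a) ≤ exp (t ^ 2 * (b - a) ^ 2 / 8) := by
  have hba : 0 < b - a := sub_pos.2 hab
  set p := b / (b - a) with hp_def
  set q := -a / (b - a) with hq_def
  have hp : 0 ≤ p := div_nonneg hb hba.le
  have hq : 0 ≤ q := div_nonneg (neg_nonneg.2 ha) hba.le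
  have hpq : p + q = 1 := by rw [hp_def, hq_def]; field_simp; ring
  set ν : Measure ℝ := ENNReal.ofReal p • Measure.dirac a + ENNReal.ofReal q • Measure.dirac b
  have hdirac (f : ℝ → ℝ) (r c : ℝ) : Integrable f (ENNReal.ofReal r • Measure.dirac c) :=
    (integrable_dirac (by simp)).smul_measure ENNReal.ofReal_ne_top
  have : IsProbabilityMeasure ν := ⟨by
    simp only [ν, Measure.add_apply, Measure.smul_apply, measure_univ, smul_eq_mul, mul_one]
    rw [← ENNReal.ofReal_add hp hq, hpq, ENNReal.ofReal_one]⟩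
  have hmean : ν[id] = 0 := by
    rw [integral_add_measure (hdirac _ _ _) (hdirac _ _ _), integral_smul_measure,
      integral_smul_measure, integral_dirac, integral_dirac, ENNReal.toReal_ofReal hp,
      ENNReal.toReal_ofReal hq, hp_def, hq_def]
    simp only [id, smul_eq_mul]
    field_simp; ring
  have hbound : ∀ᵐ ω ∂ν, id ω ∈ Set.Icc a b := ae_add_measure_iff.2
    ⟨Measure.ae_smul_measure ((ae_dirac_iff measurableSet_Icc).2 ⟨le_rfl, hab.le⟩) _,
      Measure.ae_smul_measure ((ae_dirac_iff measurableSet_Icc).2 ⟨hab.le, le_rfl⟩) _⟩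
  have hmgf : mgf id ν t = (b * exp (t * a) - a * exp (t * b)) / (b - a) := by
    rw [mgf_add_measure (hdirac _ _ _) (hdirac _ _ _), mgf_smul_measure, mgf_smul_measure,
      mgf_dirac', mgf_dirac', ENNReal.toReal_ofReal hp, ENNReal.toReal_ofReal hq, hp_def, hq_def]
    simp only [id]
    field_simp; ring
  rw [← hmgf]
  convert (hasSubgaussianMGF_of_mem_Icc_of_integral_eq_zero aemeasurable_id hbound hmean).mgf_le t
    using 2
  simp [Real.norm_of_nonneg hba.le]
  ring

theorem ConvexOn.mul_le_chord {s : Set ℝ} {f : ℝ → ℝ} (hf : ConvexOn ℝ s f) {a b x : ℝ}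
    (ha : a ∈ s) (hb : b ∈ s) (hx : x ∈ Set.Icc a b) :
    (b - a) * f x ≤ (b - x) * f a + (x - a) * f b := by
  obtain ⟨hax, hxb⟩ := hx
  rcases hax.eq_or_lt with rfl | hax
  · simp
  rcases hxb.eq_or_lt with rfl | hxb
  · simp
  exact hf.secant_mono_aux1 ha hb hax hxb

lemma exp_hoeffding_sub_one_le {a μ b x : ℝ} (hμa : a ≤ μ) (hμb : μ ≤ b) (hab : a < b)
    (hx : x ∈ Set.Icc a b) (h : ℝ) :
    exp (h * (x - μ) - h ^ 2 / 8 * (b - a) ^ 2) - 1 ≤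
      ((exp (h * (b - μ)) - exp (h * (a - μ))) / (b - a)) *
        exp (-(h ^ 2) / 8 * (b - a) ^ 2) * (x - μ) := by
  have hba : 0 < b - a := sub_pos.2 hab
  set c := h ^ 2 / 8 * (b - a) ^ 2
  set S := (exp (h * (b - μ)) - exp (h * (a - μ))) / (b - a)
  have hconvex : ConvexOn ℝ Set.univ (fun y => exp (h * (y - μ))) := by
    simpa [Function.comp_def] using
      convexOn_exp.comp_affineMap (h • (AffineMap.id ℝ ℝ - AffineMap.const ℝ ℝ μ))
  have hchord := hconvex.mul_le_chord (Set.mem_univ a) (Set.mem_univ b) hx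
  have hmgf := hoeffding_lemma_two_point (sub_nonpos.2 hμa) (sub_nonneg.2 hμb)
    (sub_lt_sub_right hab μ) h
  rw [sub_sub_sub_cancel_right, show h ^ 2 * (b - a) ^ 2 / 8 = c by ring] at hmgf
  have hexp_le : exp (h * (x - μ)) ≤ exp c + S * (x - μ) := by
    have hchord_eq : (b - x) * exp (h * (a - μ)) + (x - a) * exp (h * (b - μ)) =
        (b - a) * (((b - μ) * exp (h * (a - μ)) - (a - μ) * exp (h * (b - μ))) / (b - a) +
          S * (x - μ)) := by
      simp only [S]; field_simp; ring
    rw [hchord_eq, mul_le_mul_iff_right₀ hba] at hchord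
    linarith
  calc exp (h * (x - μ) - c) - 1 = exp (-c) * (exp (h * (x - μ)) - exp c) := by
        rw [mul_sub (exp (-c)), ← exp_add, ← exp_add, neg_add_cancel, exp_zero, neg_add_eq_sub]
    _ ≤ exp (-c) * (S * (x - μ)) := by gcongr; linarith
    _ = S * exp (-(h ^ 2) / 8 * (b - a) ^ 2) * (x - μ) := by
        rw [show -(h ^ 2) / 8 * (b - a) ^ 2 = -c by ring]; ring

theorem exists_bet_prod_le_prod_add_mul (F : ℝ → ℝ → ℝ → ℝ → ℝ) (m : ℝ → ℝ → ℝ → ℝ)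
    (hF_nonneg : ∀ a b μ x, 0 ≤ F a b μ x)
    (hF : ∀ a b μ x, a < μ → μ < b → x ∈ Set.Icc a b → F a b μ x - 1 ≤ m a b μ * (x - μ)) :
    ∃ M : (ℕ → ℝ) → (ℕ → ℝ) → (ℕ → ℝ) → (ℕ → ℝ) → ℕ → ℝ,
      (∀ (a b μ x a' b' μ' x' : ℕ → ℝ) (n : ℕ),
        (∀ k ≤ n, a k = a' k ∧ b k = b' k ∧ μ k = μ' k) →
        (∀ k < n, x k = x' k) →
        M a b μ x n = M a' b' μ' x' n) ∧
      (∀ (a b μ x : ℕ → ℝ),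
        (∀ n, a n < μ n ∧ μ n < b n ∧ x n ∈ Set.Icc (a n) (b n)) →
        ∀ n : ℕ,
          ∏ k ∈ Finset.range (n + 1), F (a k) (b k) (μ k) (x k) ≤
            ∏ k ∈ Finset.range n, F (a k) (b k) (μ k) (x k) + M a b μ x n * (x n - μ n)) := by
  refine ⟨fun a b μ x n =>
    (∏ k ∈ Finset.range n, F (a k) (b k) (μ k) (x k)) * m (a n) (b n) (μ n), ?_, ?_⟩
  · intro a b μ x a' b' μ' x' n hforecast hreality
    obtain ⟨ha, hb, hμ⟩ := hforecast n le_rfl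
    have hcapital : ∏ k ∈ Finset.range n, F (a k) (b k) (μ k) (x k) =
        ∏ k ∈ Finset.range n, F (a' k) (b' k) (μ' k) (x' k) :=
      Finset.prod_congr rfl fun k hk => by
        obtain ⟨ha, hb, hμ⟩ := hforecast k (Finset.mem_range.1 hk).le
        rw [ha, hb, hμ, hreality k (Finset.mem_range.1 hk)]
    simp only [hcapital, ha, hb, hμ]
  · intro a b μ x hmoves n
    obtain ⟨hμa, hμb, hx⟩ := hmoves n
    have hcapital_nonneg := Finset.prod_nonneg fun k (_ : k ∈ Finset.range n) =>
      hF_nonneg (a k) (b k) (μ k) (x k)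
    rw [Finset.prod_range_succ]
    linear_combination mul_le_mul_of_nonneg_left (hF _ _ _ _ hμa hμb hx) hcapital_nonneg

/-- Hoeffding's process. Fix `h ∈ ℝ`. First, for all `a < μ < b` and all
`x ∈ [a,b]`, `exp(h(x−μ) − (h²/8)(b−a)²) − 1 ≤ M(x−μ)` where
`M = ((e^{h(b−μ)} − e^{h(a−μ)})/(b−a))·exp(−(h²/8)(b−a)²)`. Consequently, in the game of
forecasting bounded variables, the product `Π_{n} exp(h(x_n−μ_n) − (h²/8)(b_n−a_n)²)` is a
supercapital process starting from `1`: there are bets `M_n`, each depending only on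
`(a_k,b_k,μ_k)` for `k ≤ n` and `x_k` for `k < n`, such that whenever `a_n < μ_n < b_n` and
`x_n ∈ [a_n,b_n]` for all `n`, the product over `k ≤ n` is bounded by the product over
`k < n` plus `M_n·(x_n − μ_n)`. -/
theorem hoeffding_process (h : ℝ) :
    (∀ a μ b : ℝ, a < μ → μ < b → ∀ x ∈ Set.Icc a b,
      Real.exp (h * (x - μ) - h ^ 2 / 8 * (b - a) ^ 2) - 1 ≤
        ((Real.exp (h * (b - μ)) - Real.exp (h * (a - μ))) / (b - a)) *
          Real.exp (-(h ^ 2) / 8 * (b - a) ^ 2) * (x - μ)) ∧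
    ∃ M : (ℕ → ℝ) → (ℕ → ℝ) → (ℕ → ℝ) → (ℕ → ℝ) → ℕ → ℝ,
      (∀ (a b μ x a' b' μ' x' : ℕ → ℝ) (n : ℕ),
        (∀ k ≤ n, a k = a' k ∧ b k = b' k ∧ μ k = μ' k) →
        (∀ k < n, x k = x' k) →
        M a b μ x n = M a' b' μ' x' n) ∧
      (∀ (a b μ x : ℕ → ℝ),
        (∀ n, a n < μ n ∧ μ n < b n ∧ x n ∈ Set.Icc (a n) (b n)) →
        ∀ n : ℕ,
          (∏ k ∈ Finset.range (n + 1),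
            Real.exp (h * (x k - μ k) - h ^ 2 / 8 * (b k - a k) ^ 2)) ≤
          (∏ k ∈ Finset.range n,
            Real.exp (h * (x k - μ k) - h ^ 2 / 8 * (b k - a k) ^ 2)) +
            M a b μ x n * (x n - μ n)) := by
  refine ⟨fun a μ b hμa hμb x hx => exp_hoeffding_sub_one_le hμa.le hμb.le (hμa.trans hμb) hx h,
    exists_bet_prod_le_prod_add_mul
      (fun a b μ x => exp (h * (x - μ) - h ^ 2 / 8 * (b - a) ^ 2))
      (fun a b μ => (exp (h * (b - μ)) - exp (h * (a - μ))) / (b - a) *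
        exp (-(h ^ 2) / 8 * (b - a) ^ 2))
      (fun _ _ _ _ => (exp_pos _).le)
      (fun _ _ _ _ hμa hμb hx => exp_hoeffding_sub_one_le hμa.le hμb.le (hμa.trans hμb) hx h)⟩
end
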